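/- arXiv:2404.08458 — 2 statements merged into one kernel-verified Lean document; each statement's English description precedes it below -/
import Mathlib

section
/- Two possible worlds w_1, w_2 ∈ W_φ, regarded as points of {0,1}^n ⊆ [0,1]^n, lie in the same connected component of the topological subspace C_φ ⊆ ℝ^n if and only if they lie in the same connected component of the prime implicant graph G of φ. In particular, C_φ is a connected topological space if and only if G is a connected graph. -/
/-- A world is an assignment of Boolean values to `n` variables. -/
abbrev World (n : ℕ) := Fin n → Bool

/-- The independent distribution with parameters `μ`:
`p_μ(w) = ∏ i, μ i ^ (w i) * (1 - μ i) ^ (1 - w i)`. -/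
def pInd {n : ℕ} (μ : Fin n → ℝ) (w : World n) : ℝ :=
  ∏ i, if w i then μ i else 1 - μ i

/-- A partial assignment with domain `D` and values `a` covers the world `w`. -/
def covers {n : ℕ} (D : Set (Fin n)) (a : Fin n → Bool) (w : World n) : Prop :=
  ∀ i ∈ D, w i = a i

/-- The cover of a partial assignment: all worlds agreeing with it on its domain. -/
def coverSet {n : ℕ} (D : Set (Fin n)) (a : Fin n → Bool) : Set (World n) :=
  {w | covers D a w}

/-- A partial assignment is an implicant of `φ` if every world in its cover is possible. -/
def Implicant {n : ℕ} (φ : World n → Bool) (D : Set (Fin n)) (a : Fin n → Bool) : Prop :=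
  ∀ w : World n, covers D a w → φ w = true

/-- A prime implicant: an implicant whose cover is not strictly contained in the cover
of another implicant. -/
def PrimeImplicant {n : ℕ} (φ : World n → Bool) (D : Set (Fin n)) (a : Fin n → Bool) : Prop :=
  Implicant φ D a ∧ ∀ (E : Set (Fin n)) (b : Fin n → Bool),
    Implicant φ E b → ¬ (coverSet D a ⊂ coverSet E b)

/-- The deterministic coordinates of the parameter vector `μ`. -/
def detDom {n : ℕ} (μ : Fin n → ℝ) : Set (Fin n) := {i | μ i = 0 ∨ μ i = 1}

/-- The value assigned by `μ` at a deterministic coordinate. -/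
noncomputable def detVal {n : ℕ} (μ : Fin n → ℝ) (i : Fin n) : Bool :=
  if μ i = 1 then true else false

/-- A distribution over worlds: nonnegative, summing to one. -/
def IsDistribution {n : ℕ} (p : World n → ℝ) : Prop :=
  (∀ w, 0 ≤ p w) ∧ ∑ w, p w = 1

/-- A distribution is possible for `φ` if it vanishes on all impossible worlds. -/
def PossibleDist {n : ℕ} (φ : World n → Bool) (p : World n → ℝ) : Prop :=
  ∀ w, φ w = false → p w = 0

/-- The unit hypercube of parameters. -/
def unitCube (n : ℕ) : Set (Fin n → ℝ) := {μ | ∀ i, μ i ∈ Set.Icc (0:ℝ) 1}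

/-- The implicant cube of a partial assignment: coordinates in `D` are fixed,
the others range over `[0,1]`. -/
def implicantCube {n : ℕ} (D : Set (Fin n)) (a : Fin n → Bool) : Set (Fin n → ℝ) :=
  {μ | (∀ i, μ i ∈ Set.Icc (0:ℝ) 1) ∧ ∀ i ∈ D, μ i = if a i then 1 else 0}

/-- The cubical set of `φ`: the union of the prime implicant cubes. -/
def cubicalSet {n : ℕ} (φ : World n → Bool) : Set (Fin n → ℝ) :=
  ⋃ (D : Set (Fin n)) (a : Fin n → Bool) (_ : PrimeImplicant φ D a), implicantCube D a

/-- The weighted model count `Σ_{w : φ(w)=1} p_μ(w)`. -/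
noncomputable def WMC {n : ℕ} (φ : World n → Bool) (μ : Fin n → ℝ) : ℝ :=
  ∑ w : World n, if φ w then pInd μ w else 0

/-- A world regarded as a point of `[0,1]^n ⊆ ℝ^n`. -/
def worldPoint {n : ℕ} (w : World n) : Fin n → ℝ := fun i => if w i then 1 else 0

/-- An elementary interval is `{0}`, `{1}` or `[0,1]`. -/
def ElemInterval (I : Set ℝ) : Prop := I = {0} ∨ I = {1} ∨ I = Set.Icc 0 1

/-- An elementary cube is a product of elementary intervals. -/
def IsElemCube {n : ℕ} (C : Set (Fin n → ℝ)) : Prop :=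
  ∃ I : Fin n → Set ℝ, (∀ i, ElemInterval (I i)) ∧ C = {x | ∀ i, x i ∈ I i}

/-- The prime implicant graph of `φ`: vertices are the possible worlds, with an edge between
two distinct possible worlds whenever some prime implicant of `φ` covers both. -/
def primeImplicantGraph {n : ℕ} (φ : World n → Bool) :
    SimpleGraph {w : World n // φ w = true} where
  Adj w₁ w₂ := w₁ ≠ w₂ ∧ ∃ (D : Set (Fin n)) (a : Fin n → Bool),
    PrimeImplicant φ D a ∧ covers D a w₁.1 ∧ covers D a w₂.1
  symm := ⟨by
    rintro w₁ w₂ ⟨hne, D, a, hp, h1, h2⟩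
    exact ⟨hne.symm, D, a, hp, h2, h1⟩⟩
  loopless := ⟨by
    intro w h
    exact h.1 rfl⟩

/-! Each prime implicant cube is convex, hence lies in a single component of `C_φ` together with
all worlds it covers; chaining along edges gives one direction. Conversely, the cubes are finitely
many closed sets and two cubes that meet cover a common world (round a common point), so grouping
the cubes by the graph component of their worlds splits `C_φ` into disjoint closed pieces, which a
connected subset cannot cross. -/

open Set

theorem IsPreconnected.subset_of_disjoint_closed_cover {X : Type*} [TopologicalSpace X]
    {s u v : Set X} (hs : IsPreconnected s) (hu : IsClosed u) (hv : IsClosed v)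
    (huv : Disjoint u v) (hsuv : s ⊆ u ∪ v) {x : X} (hxs : x ∈ s) (hxu : x ∈ u) : s ⊆ u := by
  rcases isPreconnected_iff_subset_of_disjoint_closed.1 hs u v hu hv hsuv
    (by rw [huv.inter_eq, inter_empty]) with hsu | hsv
  · exact hsu
  · exact absurd (hsv hxs) (huv.notMem_of_mem_left hxu)

theorem IsPreconnected.eq_of_mem_of_closed_cover {ι X β : Type*} [TopologicalSpace X] [Finite ι]
    {K : ι → Set X} (hK : ∀ i, IsClosed (K i)) {f : ι → β}
    (hf : ∀ i j, (K i ∩ K j).Nonempty → f i = f j) {s : Set X} (hs : IsPreconnected s)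
    (hsK : s ⊆ ⋃ i, K i) {i j : ι} {x y : X} (hx : x ∈ s ∩ K i) (hy : y ∈ s ∩ K j) :
    f i = f j := by
  set u := ⋃ k ∈ {k | f k = f i}, K k
  set v := ⋃ k ∈ {k | f k ≠ f i}, K k
  have hsuv : s ⊆ u ∪ v := by
    intro z hz
    obtain ⟨k, hk⟩ := mem_iUnion.1 (hsK hz)
    by_cases hki : f k = f i
    · exact Or.inl (mem_biUnion hki hk)
    · exact Or.inr (mem_biUnion hki hk)
  have huv : Disjoint u v := by
    refine disjoint_left.2 fun z hzu hzv => ?_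
    obtain ⟨k, hki, hzk⟩ := mem_iUnion₂.1 hzu
    obtain ⟨l, hli, hzl⟩ := mem_iUnion₂.1 hzv
    exact hli ((hf l k ⟨z, hzl, hzk⟩).trans hki)
  have hsu : s ⊆ u := hs.subset_of_disjoint_closed_cover
    ((toFinite _).isClosed_biUnion fun k _ => hK k) ((toFinite _).isClosed_biUnion fun k _ => hK k)
    huv hsuv hx.1 (mem_biUnion (show f i = f i from rfl) hx.2)
  obtain ⟨k, hki, hyk⟩ := mem_iUnion₂.1 (hsu hy.1)
  exact hki.symm.trans (hf k j ⟨y, hyk, hy.2⟩)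

section Worlds

variable {n : ℕ}

section Implicants

variable {φ : World n → Bool} {D : Set (Fin n)} {a : Fin n → Bool}

theorem covers_self (D : Set (Fin n)) (a : Fin n → Bool) : covers D a a := fun _ _ => rfl

theorem PrimeImplicant.apply_self (hp : PrimeImplicant φ D a) : φ a = true :=
  hp.1 a (covers_self D a)

theorem Implicant.exists_primeImplicant_coverSet_subset (h : Implicant φ D a) :
    ∃ E b, PrimeImplicant φ E b ∧ coverSet D a ⊆ coverSet E b := by
  let S := {q : Set (Fin n) × (Fin n → Bool) |
    Implicant φ q.1 q.2 ∧ coverSet D a ⊆ coverSet q.1 q.2}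
  obtain ⟨q, ⟨hq, hDq⟩, hmax⟩ :=
    (toFinite S).exists_maximalFor (fun q => coverSet q.1 q.2) S ⟨(D, a), h, subset_rfl⟩
  refine ⟨q.1, q.2, ⟨hq, fun E b hEb hlt => ?_⟩, hDq⟩
  exact hlt.2 (hmax (j := (E, b)) ⟨hEb, hDq.trans hlt.1⟩ hlt.1)

theorem exists_primeImplicant_covers {w : World n} (hw : φ w = true) :
    ∃ D a, PrimeImplicant φ D a ∧ covers D a w := by
  have hw' : Implicant φ univ w := fun w' hw'w => by
    rwa [funext fun i => hw'w i (mem_univ i)]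
  obtain ⟨E, b, hp, hsub⟩ := hw'.exists_primeImplicant_coverSet_subset
  exact ⟨E, b, hp, hsub (covers_self univ w)⟩

end Implicants

section Cubes

variable {φ : World n → Bool} {D : Set (Fin n)} {a : Fin n → Bool}

variable (φ) in
abbrev PrimeImplicants : Type :=
  {q : Set (Fin n) × (Fin n → Bool) // PrimeImplicant φ q.1 q.2}

variable (φ) in
theorem cubicalSet_eq_iUnion :
    cubicalSet φ = ⋃ q : PrimeImplicants φ, implicantCube q.1.1 q.1.2 := by
  ext μ
  simp [cubicalSet]

theorem implicantCube_eq_pi (D : Set (Fin n)) (a : Fin n → Bool) :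
    implicantCube D a = univ.pi (fun _ => Icc 0 1) ∩ D.pi (fun i => {if a i then 1 else 0}) := by
  ext μ
  simp [implicantCube, Set.pi]

theorem convex_implicantCube (D : Set (Fin n)) (a : Fin n → Bool) :
    Convex ℝ (implicantCube D a) := by
  rw [implicantCube_eq_pi]
  exact (convex_pi fun _ _ => convex_Icc 0 1).inter (convex_pi fun _ _ => convex_singleton _)

theorem isClosed_implicantCube (D : Set (Fin n)) (a : Fin n → Bool) :
    IsClosed (implicantCube D a) := by
  rw [implicantCube_eq_pi]
  exact (isClosed_set_pi fun _ _ => isClosed_Icc).inter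
    (isClosed_set_pi fun _ _ => isClosed_singleton)

theorem worldPoint_mem_implicantCube_iff {w : World n} :
    worldPoint w ∈ implicantCube D a ↔ covers D a w := by
  refine ⟨fun h i hi => ?_, fun h => ⟨fun i => ?_, fun i hi => ?_⟩⟩
  · have := h.2 i hi
    cases hw : w i <;> cases ha : a i <;> simp_all [worldPoint]
  · cases hw : w i <;> simp [worldPoint, hw]
  · simp [worldPoint, h i hi]

/-- `detVal μ` rounds `μ` to the world that is `true` exactly where `μ i = 1`. -/
theorem covers_detVal_of_mem_implicantCube {μ : Fin n → ℝ} (hμ : μ ∈ implicantCube D a) :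
    covers D a (detVal μ) := by
  intro i hi
  cases ha : a i <;> simp [detVal, hμ.2 i hi, ha]

theorem implicantCube_subset_cubicalSet (hp : PrimeImplicant φ D a) :
    implicantCube D a ⊆ cubicalSet φ := fun _ hμ =>
  mem_iUnion.2 ⟨D, mem_iUnion.2 ⟨a, mem_iUnion.2 ⟨hp, hμ⟩⟩⟩

end Cubes

theorem worldPoint_mem_cubicalSet {φ : World n → Bool} {w : World n} (hw : φ w = true) :
    worldPoint w ∈ cubicalSet φ := by
  obtain ⟨D, a, hp, hc⟩ := exists_primeImplicant_covers hw
  exact implicantCube_subset_cubicalSet hp (worldPoint_mem_implicantCube_iff.2 hc)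

section Components

variable {φ : World n → Bool} {D : Set (Fin n)} {a : Fin n → Bool}

theorem primeImplicantGraph_reachable_of_covers (hp : PrimeImplicant φ D a)
    {u v : {w : World n // φ w = true}} (hu : covers D a u.1) (hv : covers D a v.1) :
    (primeImplicantGraph φ).Reachable u v := by
  by_cases huv : u = v
  · exact huv ▸ .refl u
  · exact SimpleGraph.Adj.reachable ⟨huv, D, a, hp, hu, hv⟩

theorem connectedComponentIn_worldPoint_eq_of_covers (hp : PrimeImplicant φ D a)
    {w₁ w₂ : World n} (h₁ : covers D a w₁) (h₂ : covers D a w₂) :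
    connectedComponentIn (cubicalSet φ) (worldPoint w₁) =
      connectedComponentIn (cubicalSet φ) (worldPoint w₂) :=
  connectedComponentIn_eq <| (convex_implicantCube D a).isPreconnected.subset_connectedComponentIn
    (worldPoint_mem_implicantCube_iff.2 h₁) (implicantCube_subset_cubicalSet hp)
    (worldPoint_mem_implicantCube_iff.2 h₂)

theorem connectedComponentIn_worldPoint_eq_of_reachable {u v : {w : World n // φ w = true}}
    (h : (primeImplicantGraph φ).Reachable u v) :
    connectedComponentIn (cubicalSet φ) (worldPoint u.1) =
      connectedComponentIn (cubicalSet φ) (worldPoint v.1) := by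
  rw [SimpleGraph.reachable_iff_reflTransGen] at h
  induction h with
  | refl => rfl
  | tail _ hadj ih =>
    obtain ⟨-, D, a, hp, h₁, h₂⟩ := hadj
    exact ih.trans (connectedComponentIn_worldPoint_eq_of_covers hp h₁ h₂)

theorem reachable_of_connectedComponentIn_worldPoint_eq {u v : {w : World n // φ w = true}}
    (h : connectedComponentIn (cubicalSet φ) (worldPoint u.1) =
      connectedComponentIn (cubicalSet φ) (worldPoint v.1)) :
    (primeImplicantGraph φ).Reachable u v := by
  let G := primeImplicantGraph φ
  let vertex : PrimeImplicants φ → {w : World n // φ w = true} := fun q => ⟨q.1.2, q.2.apply_self⟩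
  have hcube : ∀ q r : PrimeImplicants φ,
      (implicantCube q.1.1 q.1.2 ∩ implicantCube r.1.1 r.1.2).Nonempty →
        G.connectedComponentMk (vertex q) = G.connectedComponentMk (vertex r) := by
    rintro q r ⟨μ, hμq, hμr⟩
    let w : {w : World n // φ w = true} :=
      ⟨detVal μ, q.2.1 _ (covers_detVal_of_mem_implicantCube hμq)⟩
    exact SimpleGraph.ConnectedComponent.sound <|
      (primeImplicantGraph_reachable_of_covers (v := w) q.2 (covers_self _ _)
        (covers_detVal_of_mem_implicantCube hμq)).trans
      (primeImplicantGraph_reachable_of_covers r.2 (covers_detVal_of_mem_implicantCube hμr)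
        (covers_self _ _))
  obtain ⟨D₁, a₁, hp₁, hu⟩ := exists_primeImplicant_covers u.2
  obtain ⟨D₂, a₂, hp₂, hv⟩ := exists_primeImplicant_covers v.2
  have hvertex : G.connectedComponentMk (vertex ⟨(D₁, a₁), hp₁⟩) =
      G.connectedComponentMk (vertex ⟨(D₂, a₂), hp₂⟩) :=
    isPreconnected_connectedComponentIn.eq_of_mem_of_closed_cover
      (fun q => isClosed_implicantCube _ _) hcube
      ((connectedComponentIn_subset _ _).trans (cubicalSet_eq_iUnion φ).subset)
      ⟨mem_connectedComponentIn (worldPoint_mem_cubicalSet u.2),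
        worldPoint_mem_implicantCube_iff.2 hu⟩
      ⟨h ▸ mem_connectedComponentIn (worldPoint_mem_cubicalSet v.2),
        worldPoint_mem_implicantCube_iff.2 hv⟩
  exact (primeImplicantGraph_reachable_of_covers hp₁ hu (covers_self _ _)).trans <|
    (SimpleGraph.ConnectedComponent.exact hvertex).trans
      (primeImplicantGraph_reachable_of_covers hp₂ (covers_self _ _) hv)

theorem exists_mem_connectedComponentIn_worldPoint {μ : Fin n → ℝ} (hμ : μ ∈ cubicalSet φ) :
    ∃ w : {w : World n // φ w = true},
      μ ∈ connectedComponentIn (cubicalSet φ) (worldPoint w.1) := by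
  obtain ⟨D, a, hp, hμ⟩ : ∃ D a, PrimeImplicant φ D a ∧ μ ∈ implicantCube D a := by
    simpa [cubicalSet] using hμ
  exact ⟨⟨a, hp.apply_self⟩, (convex_implicantCube D a).isPreconnected.subset_connectedComponentIn
    (worldPoint_mem_implicantCube_iff.2 (covers_self D a)) (implicantCube_subset_cubicalSet hp) hμ⟩

theorem isConnected_cubicalSet_iff :
    IsConnected (cubicalSet φ) ↔ (primeImplicantGraph φ).Connected := by
  rw [SimpleGraph.connected_iff]
  constructor
  · rintro ⟨⟨μ, hμ⟩, hS⟩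
    obtain ⟨w, -⟩ := exists_mem_connectedComponentIn_worldPoint hμ
    refine ⟨fun u v => reachable_of_connectedComponentIn_worldPoint_eq ?_, ⟨w⟩⟩
    exact connectedComponentIn_eq <| hS.subset_connectedComponentIn
      (worldPoint_mem_cubicalSet u.2) subset_rfl (worldPoint_mem_cubicalSet v.2)
  · rintro ⟨hG, ⟨w⟩⟩
    have hS : connectedComponentIn (cubicalSet φ) (worldPoint w.1) = cubicalSet φ := by
      refine (connectedComponentIn_subset _ _).antisymm fun μ hμ => ?_
      obtain ⟨u, hu⟩ := exists_mem_connectedComponentIn_worldPoint hμ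
      rwa [connectedComponentIn_worldPoint_eq_of_reachable (hG u w)] at hu
    exact hS ▸ isConnected_connectedComponentIn_iff.2 (worldPoint_mem_cubicalSet w.2)

end Components

end Worlds

theorem stmt6_general (n : ℕ) (φ : World n → Bool) :
    (∀ (w₁ w₂ : World n) (h₁ : φ w₁ = true) (h₂ : φ w₂ = true),
      connectedComponentIn (cubicalSet φ) (worldPoint w₁) =
        connectedComponentIn (cubicalSet φ) (worldPoint w₂) ↔
      (primeImplicantGraph φ).Reachable ⟨w₁, h₁⟩ ⟨w₂, h₂⟩) ∧
    (IsConnected (cubicalSet φ) ↔ (primeImplicantGraph φ).Connected) :=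
  ⟨fun _ _ _ _ => ⟨fun h => reachable_of_connectedComponentIn_worldPoint_eq h,
    fun h => connectedComponentIn_worldPoint_eq_of_reachable h⟩, isConnected_cubicalSet_iff⟩

/-- Connectedness: two possible worlds lie in the same connected component
of `C_φ` iff they lie in the same connected component of the prime implicant graph; in
particular `C_φ` is connected iff the graph is connected. -/
theorem stmt6 (n : ℕ) (hn : 1 ≤ n) (φ : World n → Bool) (hφ : ∃ w, φ w = true) :
    (∀ (w₁ w₂ : World n) (h₁ : φ w₁ = true) (h₂ : φ w₂ = true),
      connectedComponentIn (cubicalSet φ) (worldPoint w₁) =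
        connectedComponentIn (cubicalSet φ) (worldPoint w₂) ↔
      (primeImplicantGraph φ).Reachable ⟨w₁, h₁⟩ ⟨w₂, h₂⟩) ∧
    (IsConnected (cubicalSet φ) ↔ (primeImplicantGraph φ).Connected) :=
  stmt6_general n φ
end

section
/- For every k ≥ 2, the set of all distributions over worlds that are simultaneously possible for φ and representable as a mixture of k independent distributions is a path-connected subset of ℝ^{({0,1}^n)}. -/
/-!
Every possible mixture `p = Σ αₘ p_{μₘ}` can be moved along a straight segment, inside the set, to
one of its components `p_{μₘ}` with `αₘ > 0` (shift all weight onto that component); such a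
component is itself possible because the summands of `p` are nonnegative. Any two possible
independent distributions are joined by a segment of two-component mixtures, which needs `k ≥ 2`.
Hence every point is joined to the point mass at a fixed possible world.
-/

open Finset

def IsMixture {n : ℕ} (k : ℕ) (p : World n → ℝ) : Prop :=
  ∃ (α : Fin k → ℝ) (μ : Fin k → Fin n → ℝ),
    (∀ m, 0 ≤ α m) ∧ (∑ m, α m = 1) ∧ (∀ m, μ m ∈ unitCube n) ∧
    ∀ w : World n, p w = ∑ m, α m * pInd (μ m) w

def possibleMixtures {n : ℕ} (φ : World n → Bool) (k : ℕ) : Set (World n → ℝ) :=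
  {p | PossibleDist φ p ∧ IsMixture k p}

section

variable {n : ℕ}

lemma pInd_nonneg {μ : Fin n → ℝ} (hμ : μ ∈ unitCube n) (w : World n) : 0 ≤ pInd μ w :=
  prod_nonneg fun i _ => by
    split
    · exact (hμ i).1
    · exact sub_nonneg.2 (hμ i).2

lemma worldPoint_mem_unitCube (w : World n) : worldPoint w ∈ unitCube n := by
  intro i
  by_cases h : w i <;> simp [worldPoint, h]

lemma pInd_worldPoint_of_ne {w₀ w : World n} (h : w ≠ w₀) : pInd (worldPoint w₀) w = 0 := by
  obtain ⟨i, hi⟩ : ∃ i, w i ≠ w₀ i := Function.ne_iff.1 h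
  apply prod_eq_zero (mem_univ i)
  cases hw : w i <;> cases hw₀ : w₀ i <;> simp_all [worldPoint]

lemma possibleDist_pInd_worldPoint {φ : World n → Bool} {w₀ : World n} (h : φ w₀ = true) :
    PossibleDist φ (pInd (worldPoint w₀)) := fun w hw =>
  pInd_worldPoint_of_ne fun e => by simp [e, h] at hw

lemma PossibleDist.smul_add_smul {φ : World n → Bool} {p q : World n → ℝ}
    (hp : PossibleDist φ p) (hq : PossibleDist φ q) (a b : ℝ) :
    PossibleDist φ (a • p + b • q) := fun w hw => by
  simp [hp w hw, hq w hw]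

lemma PossibleDist.pInd_of_weight_ne_zero {φ : World n → Bool} {p : World n → ℝ} {k : ℕ}
    {α : Fin k → ℝ} {μ : Fin k → Fin n → ℝ} (hp : PossibleDist φ p) (hα : ∀ m, 0 ≤ α m)
    (hμ : ∀ m, μ m ∈ unitCube n) (hrep : ∀ w, p w = ∑ m, α m * pInd (μ m) w)
    {m : Fin k} (hm : α m ≠ 0) : PossibleDist φ (pInd (μ m)) := fun w hw => by
  have hterms := (sum_eq_zero_iff_of_nonneg fun m _ =>
    mul_nonneg (hα m) (pInd_nonneg (hμ m) w)).1 ((hrep w).symm.trans (hp w hw)) m (mem_univ m)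
  exact (mul_eq_zero.1 hterms).resolve_left hm

lemma isMixture_smul_add_smul_component {k : ℕ} {p : World n → ℝ} {α : Fin k → ℝ}
    {μ : Fin k → Fin n → ℝ} (hα : ∀ m, 0 ≤ α m) (hsum : ∑ m, α m = 1)
    (hμ : ∀ m, μ m ∈ unitCube n) (hrep : ∀ w, p w = ∑ m, α m * pInd (μ m) w) (m₀ : Fin k)
    {a b : ℝ} (ha : 0 ≤ a) (hb : 0 ≤ b) (hab : a + b = 1) :
    IsMixture k (a • p + b • pInd (μ m₀)) := by
  refine ⟨a • α + Pi.single m₀ b, μ, fun m => ?_, ?_, hμ, fun w => ?_⟩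
  · exact add_nonneg (mul_nonneg ha (hα m)) (by by_cases h : m = m₀ <;> simp [h, hb])
  · simp [sum_add_distrib, ← mul_sum, hsum, hab]
  · simp [hrep w, add_mul, sum_add_distrib, mul_sum, mul_assoc, Pi.single_apply]

lemma isMixture_smul_add_smul_pInd {k : ℕ} (hk : 2 ≤ k) {μ ν : Fin n → ℝ}
    (hμ : μ ∈ unitCube n) (hν : ν ∈ unitCube n)
    {a b : ℝ} (ha : 0 ≤ a) (hb : 0 ≤ b) (hab : a + b = 1) :
    IsMixture k (a • pInd μ + b • pInd ν) := by
  obtain ⟨j, rfl⟩ : ∃ j, k = j + 2 := ⟨k - 2, by omega⟩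
  refine ⟨Pi.single 0 a + Pi.single 1 b, fun m => if m = 0 then μ else ν, fun m => ?_, ?_,
    fun m => ?_, fun w => ?_⟩
  · exact add_nonneg (by by_cases h : m = 0 <;> simp [h, ha])
      (by by_cases h : m = 1 <;> simp [h, hb])
  · simp [sum_add_distrib, hab]
  · by_cases h : m = 0 <;> simp [h, hμ, hν]
  · simp [add_mul, sum_add_distrib, Pi.single_apply]

lemma joinedIn_possibleMixtures_pInd {φ : World n → Bool} {k : ℕ} (hk : 2 ≤ k)
    {μ ν : Fin n → ℝ} (hμ : μ ∈ unitCube n) (hν : ν ∈ unitCube n)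
    (hpμ : PossibleDist φ (pInd μ)) (hpν : PossibleDist φ (pInd ν)) :
    JoinedIn (possibleMixtures φ k) (pInd μ) (pInd ν) :=
  JoinedIn.of_segment_subset fun _ ⟨_, _, ha, hb, hab, hp⟩ => hp ▸
    ⟨hpμ.smul_add_smul hpν _ _, isMixture_smul_add_smul_pInd hk hμ hν ha hb hab⟩

lemma joinedIn_possibleMixtures_component {φ : World n → Bool} {k : ℕ} {p : World n → ℝ}
    {α : Fin k → ℝ} {μ : Fin k → Fin n → ℝ} (hp : PossibleDist φ p) (hα : ∀ m, 0 ≤ α m)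
    (hsum : ∑ m, α m = 1) (hμ : ∀ m, μ m ∈ unitCube n)
    (hrep : ∀ w, p w = ∑ m, α m * pInd (μ m) w) {m : Fin k} (hm : α m ≠ 0) :
    JoinedIn (possibleMixtures φ k) p (pInd (μ m)) :=
  JoinedIn.of_segment_subset fun _ ⟨_, _, ha, hb, hab, hq⟩ => hq ▸
    ⟨hp.smul_add_smul (hp.pInd_of_weight_ne_zero hα hμ hrep hm) _ _,
      isMixture_smul_add_smul_component hα hsum hμ hrep m ha hb hab⟩

end

theorem stmt15_general (n : ℕ) (φ : World n → Bool) (hφ : ∃ w, φ w = true)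
    (k : ℕ) (hk : 2 ≤ k) :
    IsPathConnected {p : World n → ℝ | PossibleDist φ p ∧
      ∃ (α : Fin k → ℝ) (μ : Fin k → Fin n → ℝ),
        (∀ m, 0 ≤ α m) ∧ (∑ m, α m = 1) ∧ (∀ m, μ m ∈ unitCube n) ∧
        ∀ w : World n, p w = ∑ m, α m * pInd (μ m) w} := by
  show IsPathConnected (possibleMixtures φ k)
  obtain ⟨w₀, hw₀⟩ := hφ
  have hδ := possibleDist_pInd_worldPoint hw₀
  have joined_δ : ∀ μ ∈ unitCube n, PossibleDist φ (pInd μ) →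
      JoinedIn (possibleMixtures φ k) (pInd μ) (pInd (worldPoint w₀)) := fun μ hμ hpμ =>
    joinedIn_possibleMixtures_pInd hk hμ (worldPoint_mem_unitCube w₀) hpμ hδ
  refine ⟨_, (joined_δ _ (worldPoint_mem_unitCube w₀) hδ).target_mem, ?_⟩
  rintro p ⟨hp, α, μ, hα, hsum, hμ, hrep⟩
  obtain ⟨m, hm⟩ : ∃ m, α m ≠ 0 := by
    by_contra! h
    simp [h] at hsum
  exact ((joinedIn_possibleMixtures_component hp hα hsum hμ hrep hm).trans
    (joined_δ _ (hμ m) (hp.pInd_of_weight_ne_zero hα hμ hrep hm))).symm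

/-- for `k ≥ 2`, the set of distributions that are possible for `φ` and
representable as mixtures of `k` independent distributions is path-connected. -/
theorem stmt15 (n : ℕ) (hn : 1 ≤ n) (φ : World n → Bool) (hφ : ∃ w, φ w = true)
    (k : ℕ) (hk : 2 ≤ k) :
    IsPathConnected {p : World n → ℝ | PossibleDist φ p ∧
      ∃ (α : Fin k → ℝ) (μ : Fin k → Fin n → ℝ),
        (∀ m, 0 ≤ α m) ∧ (∑ m, α m = 1) ∧ (∀ m, μ m ∈ unitCube n) ∧
        ∀ w : World n, p w = ∑ m, α m * pInd (μ m) w} :=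
  stmt15_general n φ hφ k hk
end
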